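/- arXiv:1106.5979 — 2 statements merged into one kernel-verified Lean document; each statement's English description precedes it below -/
import Mathlib

section
/- Let o₁ = [l₁,u₁] and o₂ = [l₂,u₂] be two non-overlapping uncertain 1D objects, i.e. u₁ ≤ l₂, with (possibly different) lengths n₁ = u₁ − l₁ and n₂ = u₂ − l₂, and let b = (m₁ + m₂)/2 be the bisector of their midpoints m₁ = (l₁+u₁)/2 and m₂ = (l₂+u₂)/2. Then p(b) = 1/2; moreover p(q) > 1/2 for every q < b, and p(q) < 1/2 for every q > b. In other words, the probabilistic bisector of two non-overlapping 1D objects is the bisector of their midpoints. -/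
open MeasureTheory
open scoped ENNReal

/-- The uniform probability measure on the closed interval `[a, b]`. -/
noncomputable def unif (a b : ℝ) : Measure ℝ :=
  (volume (Set.Icc a b))⁻¹ • volume.restrict (Set.Icc a b)

/-- Probability that the uncertain object `[l₁,u₁]` is nearer to the query point `q`
than the uncertain object `[l₂,u₂]`. -/
noncomputable def nnProb (l₁ u₁ l₂ u₂ q : ℝ) : ℝ≥0∞ :=
  ((unif l₁ u₁).prod (unif l₂ u₂)) {xy : ℝ × ℝ | |xy.1 - q| < |xy.2 - q|}

/-!
Since `u₁ ≤ l₂`, almost surely `X < Y`, and then `|X - q| < |Y - q|` exactly when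
`q < (X + Y) / 2`; so `p(q)` is the upper tail at `q` of the law of the midpoint `(X + Y) / 2`.
Each uniform law is symmetric about its midpoint, so this law is symmetric about `b`, and it has
no atoms; hence its tail at `b` is `1 / 2`. Every interval with endpoint `b` has positive mass
(it contains the image of a small box around `(m₁, m₂)`), so the tail is strictly decreasing
across `b`.
-/

open Set

lemma abs_sub_lt_abs_sub_iff_lt_avg {x y q : ℝ} (hxy : x < y) :
    |x - q| < |y - q| ↔ q < (x + y) / 2 := by
  rw [← sq_lt_sq]
  constructor <;> intro h <;> nlinarith

section MeasureReal

variable {ρ : Measure ℝ}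

lemma measure_Ioi_eq_half_of_map_reflect [IsProbabilityMeasure ρ] [NullSingletonClass ρ] {t : ℝ}
    (hρ : ρ.map (fun x => 2 * t - x) = ρ) : ρ (Ioi t) = 1 / 2 := by
  have hIio : ρ (Iio t) = ρ (Ioi t) := by
    conv_lhs => rw [← hρ]
    rw [Measure.map_apply (by fun_prop) measurableSet_Iio]
    congr 1
    ext x
    simp only [mem_preimage, mem_Iio, mem_Ioi]
    constructor <;> intro h <;> linarith
  have hsum : ρ (Iic t) + ρ (Ioi t) = 1 := by
    rw [← compl_Iic]; exact prob_add_prob_compl measurableSet_Iic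
  rw [← measure_congr Iio_ae_eq_Iic, hIio, ← two_mul] at hsum
  rw [ENNReal.eq_div_iff two_ne_zero ENNReal.ofNat_ne_top, hsum]

lemma measure_Ioi_lt_measure_Ioi [IsFiniteMeasure ρ] {q t : ℝ} (hpos : 0 < ρ (Ioo q t)) :
    ρ (Ioi t) < ρ (Ioi q) := by
  have hqt : q < t := nonempty_Ioo.1 (nonempty_of_measure_ne_zero hpos.ne')
  calc ρ (Ioi t) < ρ (Ioi t) + ρ (Ioo q t) := ENNReal.lt_add_right (measure_ne_top _ _) hpos.ne'
    _ ≤ ρ (Ioi t) + ρ (Ioc q t) := by gcongr; exact Ioo_subset_Ioc_self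
    _ = ρ (Ioi q) := by
      rw [← Ioc_union_Ioi_eq_Ioi hqt.le, add_comm,
        measure_union Ioc_disjoint_Ioi_same measurableSet_Ioi]

end MeasureReal

noncomputable def midpointLaw (μ ν : Measure ℝ) : Measure ℝ :=
  (μ.prod ν).map fun p => (p.1 + p.2) / 2

section MidpointLaw

variable {μ ν : Measure ℝ}

lemma midpointLaw_apply {s : Set ℝ} (hs : MeasurableSet s) :
    midpointLaw μ ν s = μ.prod ν ((fun p => (p.1 + p.2) / 2) ⁻¹' s) :=
  Measure.map_apply (by fun_prop) hs

instance [IsProbabilityMeasure μ] [IsProbabilityMeasure ν] :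
    IsProbabilityMeasure (midpointLaw μ ν) :=
  Measure.isProbabilityMeasure_map (by fun_prop)

instance [SFinite ν] [NullSingletonClass ν] : NullSingletonClass (midpointLaw μ ν) := by
  refine ⟨fun t => ?_⟩
  rw [midpointLaw_apply (measurableSet_singleton t),
    Measure.measure_prod_null (measurableSet_singleton t |>.preimage (by fun_prop))]
  refine Filter.Eventually.of_forall fun x => measure_mono_null (fun y hy => ?_)
    (measure_singleton (2 * t - x))
  simp only [mem_preimage, mem_singleton_iff] at hy ⊢
  linarith

lemma map_reflect_midpointLaw [SFinite μ] [SFinite ν] {m₁ m₂ : ℝ}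
    (hμ : μ.map (fun x => 2 * m₁ - x) = μ) (hν : ν.map (fun y => 2 * m₂ - y) = ν) :
    (midpointLaw μ ν).map (fun x => 2 * ((m₁ + m₂) / 2) - x) = midpointLaw μ ν := by
  have hcomm : (fun x => 2 * ((m₁ + m₂) / 2) - x) ∘ (fun p : ℝ × ℝ => (p.1 + p.2) / 2) =
      (fun p => (p.1 + p.2) / 2) ∘ Prod.map (fun x => 2 * m₁ - x) (fun y => 2 * m₂ - y) := by
    funext p; simp only [Function.comp, Prod.map]; ring
  rw [midpointLaw, Measure.map_map (by fun_prop) (by fun_prop), hcomm,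
    ← Measure.map_map (by fun_prop) (by fun_prop), ← Measure.map_prod_map _ _ (by fun_prop)
    (by fun_prop), hμ, hν]

lemma midpointLaw_Ioo_pos [SFinite ν] {c d c₁ d₁ c₂ d₂ : ℝ} (hμ : 0 < μ (Ioo c₁ d₁))
    (hν : 0 < ν (Ioo c₂ d₂)) (hc : c ≤ (c₁ + c₂) / 2) (hd : (d₁ + d₂) / 2 ≤ d) :
    0 < midpointLaw μ ν (Ioo c d) := by
  have hbox : Ioo c₁ d₁ ×ˢ Ioo c₂ d₂ ⊆ (fun p : ℝ × ℝ => (p.1 + p.2) / 2) ⁻¹' Ioo c d := by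
    rintro ⟨x, y⟩ ⟨⟨hx₁, hx₂⟩, ⟨hy₁, hy₂⟩⟩
    constructor <;> simp only <;> linarith
  calc 0 < μ (Ioo c₁ d₁) * ν (Ioo c₂ d₂) := ENNReal.mul_pos hμ.ne' hν.ne'
    _ = μ.prod ν (Ioo c₁ d₁ ×ˢ Ioo c₂ d₂) := (Measure.prod_prod _ _).symm
    _ ≤ midpointLaw μ ν (Ioo c d) := by
      rw [midpointLaw_apply measurableSet_Ioo]; exact measure_mono hbox

end MidpointLaw

section Unif

variable {a b : ℝ}

instance : NullSingletonClass (unif a b) :=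
  ⟨fun x => by simp [unif]⟩

instance : IsZeroOrProbabilityMeasure (unif a b) :=
  inferInstanceAs (IsZeroOrProbabilityMeasure (ProbabilityTheory.cond volume (Icc a b)))

lemma isProbabilityMeasure_unif (hab : a < b) : IsProbabilityMeasure (unif a b) :=
  ProbabilityTheory.cond_isProbabilityMeasure_of_finite (by simp [hab]) (by simp)

lemma ae_mem_Ioo_unif : ∀ᵐ x ∂unif a b, x ∈ Ioo a b := by
  rw [unif, ← restrict_Ioo_eq_restrict_Icc]
  exact (ae_restrict_mem measurableSet_Ioo).filter_mono (Measure.ae_smul_measure_le _)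

lemma map_reflect_unif : (unif a b).map (fun x => 2 * ((a + b) / 2) - x) = unif a b := by
  have hIcc : (fun x => 2 * ((a + b) / 2) - x) ⁻¹' Icc a b = Icc a b := by
    rw [preimage_const_sub_Icc]; congr 1 <;> ring
  have hpres := (volume.measurePreserving_sub_left (2 * ((a + b) / 2))).restrict_preimage
    (measurableSet_Icc (a := a) (b := b))
  rw [hIcc] at hpres
  rw [unif, Measure.map_smul, hpres.map_eq]

lemma unif_Ioo_pos {c d : ℝ} (hab : a < b) (hcd : c < d) (hcb : c < b) (had : a < d) :
    0 < unif a b (Ioo c d) := by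
  have hne : (Ioo a b ∩ Ioo c d).Nonempty := by
    rw [Ioo_inter_Ioo, nonempty_Ioo]; exact max_lt (lt_min hab had) (lt_min hcb hcd)
  rw [unif, Measure.smul_apply, Measure.restrict_apply measurableSet_Ioo, smul_eq_mul]
  refine ENNReal.mul_pos (by simp) (ne_of_gt ?_)
  calc 0 < volume (Ioo a b ∩ Ioo c d) := isOpen_Ioo.inter isOpen_Ioo |>.measure_pos _ hne
    _ ≤ volume (Ioo c d ∩ Icc a b) := by
      rw [inter_comm]; exact measure_mono (inter_subset_inter_right _ Ioo_subset_Icc_self)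

end Unif

-- The box around the two midpoints, shifted by `(c - b, d - b)`, is mapped into `Ioo c d`.
lemma midpointLaw_unif_Ioo_pos {l₁ u₁ l₂ u₂ c d : ℝ} (h₁ : l₁ < u₁) (h₂ : l₂ < u₂)
    (hc : c ≤ ((l₁ + u₁) / 2 + (l₂ + u₂) / 2) / 2)
    (hd : ((l₁ + u₁) / 2 + (l₂ + u₂) / 2) / 2 ≤ d) (hcd : c < d) :
    0 < midpointLaw (unif l₁ u₁) (unif l₂ u₂) (Ioo c d) := by
  set b := ((l₁ + u₁) / 2 + (l₂ + u₂) / 2) / 2 with hb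
  exact midpointLaw_Ioo_pos
    (unif_Ioo_pos (c := (l₁ + u₁) / 2 + (c - b)) (d := (l₁ + u₁) / 2 + (d - b)) h₁
      (by linarith) (by linarith) (by linarith))
    (unif_Ioo_pos (c := (l₂ + u₂) / 2 + (c - b)) (d := (l₂ + u₂) / 2 + (d - b)) h₂
      (by linarith) (by linarith) (by linarith))
    (by linarith) (by linarith)

lemma nnProb_eq_midpointLaw_Ioi {l₁ u₁ l₂ u₂ : ℝ} (hsep : u₁ ≤ l₂) (q : ℝ) :
    nnProb l₁ u₁ l₂ u₂ q = midpointLaw (unif l₁ u₁) (unif l₂ u₂) (Ioi q) := by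
  have hlt : ∀ᵐ p ∂(unif l₁ u₁).prod (unif l₂ u₂), p.1 < p.2 := by
    filter_upwards [Measure.quasiMeasurePreserving_fst.ae ae_mem_Ioo_unif,
      Measure.quasiMeasurePreserving_snd.ae ae_mem_Ioo_unif] with p hx hy
    exact hx.2.trans_le (hsep.trans_lt hy.1).le
  rw [nnProb, midpointLaw_apply measurableSet_Ioi]
  refine measure_congr (Filter.eventuallyEq_set.2 ?_)
  filter_upwards [hlt] with p hp
  exact abs_sub_lt_abs_sub_iff_lt_avg hp

theorem prob_bisector_non_overlapping (l₁ u₁ l₂ u₂ b : ℝ)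
    (h₁ : l₁ < u₁) (h₂ : l₂ < u₂)
    (hsep : u₁ ≤ l₂)
    (hb : b = ((l₁ + u₁) / 2 + (l₂ + u₂) / 2) / 2) :
    nnProb l₁ u₁ l₂ u₂ b = 1 / 2 ∧
    (∀ q : ℝ, q < b → nnProb l₁ u₁ l₂ u₂ q > 1 / 2) ∧
    (∀ q : ℝ, q > b → nnProb l₁ u₁ l₂ u₂ q < 1 / 2) := by
  subst hb
  have := isProbabilityMeasure_unif h₁
  have := isProbabilityMeasure_unif h₂
  have hρ := nnProb_eq_midpointLaw_Ioi (l₁ := l₁) (u₂ := u₂) hsep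
  have hhalf : midpointLaw (unif l₁ u₁) (unif l₂ u₂) (Ioi _) = 1 / 2 :=
    measure_Ioi_eq_half_of_map_reflect (map_reflect_midpointLaw map_reflect_unif map_reflect_unif)
  refine ⟨by rw [hρ, hhalf], fun q hq => ?_, fun q hq => ?_⟩
  · rw [hρ, ← hhalf]
    exact measure_Ioi_lt_measure_Ioi (midpointLaw_unif_Ioo_pos h₁ h₂ hq.le le_rfl hq)
  · rw [hρ, ← hhalf]
    exact measure_Ioi_lt_measure_Ioi (midpointLaw_unif_Ioo_pos h₁ h₂ le_rfl hq.le hq)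
end

section
/- Let o₁ = [l₁,u₁] and o₂ = [l₂,u₂] be two uncertain 1D objects with a common midpoint, i.e. (l₁+u₁)/2 = (l₂+u₂)/2, with o₂ strictly contained in o₁ (l₁ < l₂ and u₂ < u₁). Let x₁ = (l₁+l₂)/2 and x₂ = (u₁+u₂)/2. Then p(x₁) = p(x₂) = 1/2, and p(q) < 1/2 for every q with x₁ < q < x₂. In other words, x₁ and x₂ are probabilistic bisectors of o₁ and o₂, and strictly between them the smaller (contained) object is strictly the more probable nearest neighbor. -/
open MeasureTheory
open scoped ENNReal

/-!
Conditioning on the position `y ∈ [l₂, u₂] ⊆ [l₁, u₁]` of the second object, the first one wins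
iff it falls in the open interval of radius `|y - q|` about `q`. The part of that interval inside
`[l₁, u₁]` has length `2|y - q|` minus its overhangs `(y - (2q - l₁))⁺` and `(2q - u₁ - y)⁺` beyond
the endpoints. These are ramp functions of `y`, so `n₁ n₂ p(q)` is an explicit piecewise quadratic
function of `q`, and all three claims become polynomial (in)equalities, checked case by case on
the signs of the ramps.
-/

open ProbabilityTheory Set

lemma unif_eq_cond (a b : ℝ) : unif a b = volume[|Icc a b] := rfl

instance (a b : ℝ) : IsZeroOrProbabilityMeasure (unif a b) :=
  inferInstanceAs (IsZeroOrProbabilityMeasure volume[|Icc a b])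

lemma volume_Ioo_inter_Icc (a b c d : ℝ) :
    volume (Ioo a b ∩ Icc c d) = ENNReal.ofReal (min b d - max a c) := by
  rw [measure_congr (Ioo_ae_eq_Icc.inter (ae_eq_refl (Icc c d))), Icc_inter_Icc, Real.volume_Icc]

lemma integral_max_zero (a b : ℝ) :
    ∫ y in a..b, max y 0 = (max b 0 ^ 2 - max a 0 ^ 2) / 2 := by
  have from_zero (x : ℝ) : ∫ y in (0 : ℝ)..x, max y 0 = max x 0 ^ 2 / 2 := by
    rcases le_total 0 x with hx | hx
    · rw [intervalIntegral.integral_congr (g := fun y => y) fun y hy =>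
        max_eq_left (uIcc_of_le hx ▸ hy).1]
      simp [hx]
    · rw [intervalIntegral.integral_congr (g := fun _ => 0) fun y hy =>
        max_eq_right (uIcc_of_ge hx ▸ hy).2]
      simp [hx]
  have hint (a b : ℝ) : IntervalIntegrable (fun y : ℝ => max y 0) volume a b :=
    Continuous.intervalIntegrable (by fun_prop) a b
  rw [← intervalIntegral.integral_interval_sub_left (hint 0 b) (hint 0 a), from_zero, from_zero]
  ring

lemma integral_max_sub_zero (a b c : ℝ) :
    ∫ y in a..b, max (y - c) 0 = (max (b - c) 0 ^ 2 - max (a - c) 0 ^ 2) / 2 := by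
  rw [intervalIntegral.integral_comp_sub_right (fun y => max y 0), integral_max_zero]

lemma integral_max_sub_zero' (a b c : ℝ) :
    ∫ y in a..b, max (c - y) 0 = (max (c - a) 0 ^ 2 - max (c - b) 0 ^ 2) / 2 := by
  rw [intervalIntegral.integral_comp_sub_left (fun y => max y 0), integral_max_zero]

noncomputable def closerLength (l u q y : ℝ) : ℝ :=
  2 * |y - q| - max (y - (2 * q - l)) 0 - max (2 * q - u - y) 0

lemma min_sub_max_eq_closerLength {l u q y : ℝ} (hy : y ∈ Icc l u) :
    min (q + |y - q|) u - max (q - |y - q|) l = closerLength l u q y := by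
  obtain ⟨hly, hyu⟩ := hy
  unfold closerLength
  rcases abs_cases (y - q) with ⟨h, hs⟩ | ⟨h, hs⟩ <;> rw [h] <;>
    simp only [min_def, max_def] <;> split_ifs <;> linarith

lemma closerLength_nonneg {l u q y : ℝ} (hy : y ∈ Icc l u) : 0 ≤ closerLength l u q y := by
  rw [← min_sub_max_eq_closerLength hy, sub_nonneg]
  have := neg_abs_le (y - q)
  have := le_abs_self (y - q)
  exact max_le (le_min (by linarith) (by linarith [hy.2])) (le_min (by linarith [hy.1]) (hy.1.trans hy.2))

lemma volume_ball_inter_Icc {l u q y : ℝ} (hy : y ∈ Icc l u) :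
    volume ({x | |x - q| < |y - q|} ∩ Icc l u) = ENNReal.ofReal (closerLength l u q y) := by
  have ball_eq : {x | |x - q| < |y - q|} = Ioo (q - |y - q|) (q + |y - q|) := by
    rw [← Real.ball_eq_Ioo]; ext x; simp [Real.dist_eq]
  rw [ball_eq, volume_Ioo_inter_Icc, min_sub_max_eq_closerLength hy]

lemma nnProb_eq_integral {l₁ u₁ l₂ u₂ : ℝ} (h₂ : l₂ < u₂) (hl : l₁ ≤ l₂) (hu : u₂ ≤ u₁) (q : ℝ) :
    nnProb l₁ u₁ l₂ u₂ q =
      ENNReal.ofReal ((∫ y in l₂..u₂, closerLength l₁ u₁ q y) / ((u₁ - l₁) * (u₂ - l₂))) := by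
  have hn₁ : 0 < u₁ - l₁ := by linarith
  have hS : MeasurableSet {xy : ℝ × ℝ | |xy.1 - q| < |xy.2 - q|} :=
    measurableSet_lt (by fun_prop) (by fun_prop)
  have slice : ∀ y ∈ Icc l₂ u₂,
      unif l₁ u₁ ((fun x => (x, y)) ⁻¹' {xy : ℝ × ℝ | |xy.1 - q| < |xy.2 - q|})
        = ENNReal.ofReal (closerLength l₁ u₁ q y) * (ENNReal.ofReal (u₁ - l₁))⁻¹ := by
    intro y hy
    rw [unif_eq_cond, cond_apply measurableSet_Icc, inter_comm, preimage_ofPred_eq,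
      volume_ball_inter_Icc ⟨hl.trans hy.1, hy.2.trans hu⟩, Real.volume_Icc, mul_comm]
  rw [nnProb, Measure.prod_apply_symm hS, unif, lintegral_smul_measure,
    setLIntegral_congr_fun measurableSet_Icc slice, lintegral_mul_const' _ _ (by simpa using hn₁),
    ← ofReal_integral_eq_lintegral_ofReal, integral_Icc_eq_integral_Ioc,
    ← intervalIntegral.integral_of_le h₂.le, Real.volume_Icc,
    ENNReal.ofReal_div_of_pos (by nlinarith), ENNReal.ofReal_mul hn₁.le, div_eq_mul_inv,
    ENNReal.mul_inv (.inl (ENNReal.ofReal_pos.2 hn₁).ne') (by simp), smul_eq_mul]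
  · ring
  · exact Continuous.integrableOn_Icc (by unfold closerLength; fun_prop)
  · exact (ae_restrict_mem measurableSet_Icc).mono fun y hy =>
      closerLength_nonneg ⟨hl.trans hy.1, hy.2.trans hu⟩

noncomputable def closerLengthPrimitive (l u q y : ℝ) : ℝ :=
  (y - q) * |y - q| - max (y - (2 * q - l)) 0 ^ 2 / 2 + max (2 * q - u - y) 0 ^ 2 / 2

lemma integral_closerLength (l u q a b : ℝ) :
    ∫ y in a..b, closerLength l u q y =
      closerLengthPrimitive l u q b - closerLengthPrimitive l u q a := by
  have abs_eq (y : ℝ) : |y - q| = max (y - q) 0 + max (q - y) 0 := by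
    rcases le_total q y with h | h <;> simp [abs_of_nonneg, abs_of_nonpos, h]
  have mul_abs_eq (y : ℝ) : (y - q) * |y - q| = max (y - q) 0 ^ 2 - max (q - y) 0 ^ 2 := by
    rcases le_total q y with h | h <;> simp [abs_of_nonneg, abs_of_nonpos, h] <;> ring
  simp only [closerLength, abs_eq, mul_add]
  rw [intervalIntegral.integral_sub, intervalIntegral.integral_sub, intervalIntegral.integral_add,
    intervalIntegral.integral_const_mul, intervalIntegral.integral_const_mul,
    integral_max_sub_zero, integral_max_sub_zero', integral_max_sub_zero, integral_max_sub_zero',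
    closerLengthPrimitive, closerLengthPrimitive, mul_abs_eq, mul_abs_eq]
  · ring
  all_goals exact Continuous.intervalIntegrable (by fun_prop) _ _

lemma closerLengthPrimitive_sub_left {l₁ u₁ l₂ u₂ : ℝ} (hmid : l₁ + u₁ = l₂ + u₂)
    (hl : l₁ ≤ l₂) (h₂ : l₂ ≤ u₂) :
    closerLengthPrimitive l₁ u₁ ((l₁ + l₂) / 2) u₂ - closerLengthPrimitive l₁ u₁ ((l₁ + l₂) / 2) l₂
      = (u₁ - l₁) * (u₂ - l₂) / 2 := by
  have h₁ : 0 ≤ u₂ - (l₁ + l₂) / 2 := by linarith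
  have h₂ : 0 ≤ l₂ - (l₁ + l₂) / 2 := by linarith
  have h₃ : 0 ≤ u₂ - (2 * ((l₁ + l₂) / 2) - l₁) := by linarith
  have h₄ : l₂ - (2 * ((l₁ + l₂) / 2) - l₁) ≤ 0 := by linarith
  have h₅ : 2 * ((l₁ + l₂) / 2) - u₁ - u₂ ≤ 0 := by linarith
  have h₆ : 2 * ((l₁ + l₂) / 2) - u₁ - l₂ ≤ 0 := by linarith
  simp only [closerLengthPrimitive, abs_of_nonneg, max_eq_left, max_eq_right,
    h₁, h₂, h₃, h₄, h₅, h₆]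
  linear_combination (l₂ - u₂) / 2 * hmid

lemma closerLengthPrimitive_sub_right {l₁ u₁ l₂ u₂ : ℝ} (hmid : l₁ + u₁ = l₂ + u₂)
    (hu : u₂ ≤ u₁) (h₂ : l₂ ≤ u₂) :
    closerLengthPrimitive l₁ u₁ ((u₁ + u₂) / 2) u₂ - closerLengthPrimitive l₁ u₁ ((u₁ + u₂) / 2) l₂
      = (u₁ - l₁) * (u₂ - l₂) / 2 := by
  have h₁ : u₂ - (u₁ + u₂) / 2 ≤ 0 := by linarith
  have h₂ : l₂ - (u₁ + u₂) / 2 ≤ 0 := by linarith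
  have h₃ : u₂ - (2 * ((u₁ + u₂) / 2) - l₁) ≤ 0 := by linarith
  have h₄ : l₂ - (2 * ((u₁ + u₂) / 2) - l₁) ≤ 0 := by linarith
  have h₅ : 2 * ((u₁ + u₂) / 2) - u₁ - u₂ ≤ 0 := by linarith
  have h₆ : 0 ≤ 2 * ((u₁ + u₂) / 2) - u₁ - l₂ := by linarith
  simp only [closerLengthPrimitive, abs_of_nonpos, max_eq_left, max_eq_right,
    h₁, h₂, h₃, h₄, h₅, h₆]
  linear_combination (u₂ - l₂) / 2 * hmid

lemma closerLengthPrimitive_sub_lt {l₁ u₁ l₂ u₂ q : ℝ} (hmid : l₁ + u₁ = l₂ + u₂)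
    (h₂ : l₂ < u₂) (hl : l₁ < l₂) (hq₁ : (l₁ + l₂) / 2 < q) (hq₂ : q < (u₁ + u₂) / 2) :
    closerLengthPrimitive l₁ u₁ q u₂ - closerLengthPrimitive l₁ u₁ q l₂
      < (u₁ - l₁) * (u₂ - l₂) / 2 := by
  have e₁ : max (l₂ - (2 * q - l₁)) 0 = 0 := max_eq_right (by linarith)
  have e₂ : max (2 * q - u₁ - u₂) 0 = 0 := max_eq_right (by linarith)
  simp only [closerLengthPrimitive, e₁, e₂]
  rcases le_total 0 (u₂ - q) with h₃ | h₃ <;> rcases le_total 0 (l₂ - q) with h₄ | h₄ <;>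
    rcases le_total 0 (u₂ - (2 * q - l₁)) with h₅ | h₅ <;>
    rcases le_total 0 (2 * q - u₁ - l₂) with h₆ | h₆ <;>
    simp only [abs_of_nonneg, abs_of_nonpos, max_eq_left, max_eq_right, h₃, h₄, h₅, h₆] <;>
    nlinarith

theorem prob_bisector_common_midpoint_general (l₁ u₁ l₂ u₂ x₁ x₂ : ℝ)
    (h₂ : l₂ < u₂)
    (hmid : (l₁ + u₁) / 2 = (l₂ + u₂) / 2)
    (hl : l₁ < l₂) (hu : u₂ < u₁)
    (hx₁ : x₁ = (l₁ + l₂) / 2) (hx₂ : x₂ = (u₁ + u₂) / 2) :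
    nnProb l₁ u₁ l₂ u₂ x₁ = 1 / 2 ∧
    nnProb l₁ u₁ l₂ u₂ x₂ = 1 / 2 ∧
    (∀ q : ℝ, x₁ < q → q < x₂ → nnProb l₁ u₁ l₂ u₂ q < 1 / 2) := by
  have hmid' : l₁ + u₁ = l₂ + u₂ := by linarith
  have hD : 0 < (u₁ - l₁) * (u₂ - l₂) := by nlinarith
  have closed_form (q : ℝ) : nnProb l₁ u₁ l₂ u₂ q = ENNReal.ofReal
      ((closerLengthPrimitive l₁ u₁ q u₂ - closerLengthPrimitive l₁ u₁ q l₂) /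
        ((u₁ - l₁) * (u₂ - l₂))) := by
    rw [nnProb_eq_integral h₂ hl.le hu.le, integral_closerLength]
  have half : ENNReal.ofReal (1 / 2) = 1 / 2 := by
    rw [ENNReal.ofReal_div_of_pos two_pos, ENNReal.ofReal_one, ENNReal.ofReal_ofNat]
  have half_of_eq {x : ℝ} (hx : x = (u₁ - l₁) * (u₂ - l₂) / 2) :
      ENNReal.ofReal (x / ((u₁ - l₁) * (u₂ - l₂))) = 1 / 2 := by
    rw [hx, ← half, div_right_comm, div_self hD.ne']
  refine ⟨?_, ?_, fun q hq₁ hq₂ => ?_⟩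
  · rw [closed_form, hx₁, half_of_eq (closerLengthPrimitive_sub_left hmid' hl.le h₂.le)]
  · rw [closed_form, hx₂, half_of_eq (closerLengthPrimitive_sub_right hmid' hu.le h₂.le)]
  · rw [closed_form, ← half, ENNReal.ofReal_lt_ofReal_iff (by norm_num), div_lt_iff₀ hD]
    linarith [closerLengthPrimitive_sub_lt hmid' h₂ hl (hx₁ ▸ hq₁) (hx₂ ▸ hq₂)]

theorem prob_bisector_common_midpoint (l₁ u₁ l₂ u₂ x₁ x₂ : ℝ)
    (h₁ : l₁ < u₁) (h₂ : l₂ < u₂)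
    (hmid : (l₁ + u₁) / 2 = (l₂ + u₂) / 2)
    (hl : l₁ < l₂) (hu : u₂ < u₁)
    (hx₁ : x₁ = (l₁ + l₂) / 2) (hx₂ : x₂ = (u₁ + u₂) / 2) :
    nnProb l₁ u₁ l₂ u₂ x₁ = 1 / 2 ∧
    nnProb l₁ u₁ l₂ u₂ x₂ = 1 / 2 ∧
    (∀ q : ℝ, x₁ < q → q < x₂ → nnProb l₁ u₁ l₂ u₂ q < 1 / 2) :=
  prob_bisector_common_midpoint_general l₁ u₁ l₂ u₂ x₁ x₂ h₂ hmid hl hu hx₁ hx₂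
end
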